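/- The map y ↦ x defined by x^k_j = (-1)^k Σ_K (-1)^p y^{k_1}_{j+(k_2+...+k_p)n} ⋯ y^{k_{p-1}}_{j+k_p n} y^{k_p}_j (sum over compositions K of k) is an involution: substituting x back through the same formula recovers y, i.e. y^k_j = (-1)^k Σ_K (-1)^p x^{k_1}_{j+(k_2+...+k_p)n} ⋯ x^{k_{p-1}}_{j+k_p n} x^{k_p}_j. -/

import Mathlib

open Finset

/-- The finset of compositions of `k` into `p` positive parts, encoded as
functions `Fin p → Fin (k+1)`. -/
def comps (k p : ℕ) : Finset (Fin p → Fin (k + 1)) :=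
  Finset.univ.filter fun K => (∀ i, 1 ≤ (K i : ℕ)) ∧ (∑ i, (K i : ℕ)) = k

/-- Partial sum `k_1 + ⋯ + k_{i-1}` of the parts of a composition before index `i`. -/
def prefSum {k p : ℕ} (K : Fin p → Fin (k + 1)) (i : Fin p) : ℤ :=
  ∑ j ∈ Finset.Iio i, ((K j : ℕ) : ℤ)

/-- Partial sum `k_{i+1} + ⋯ + k_p` of the parts of a composition after index `i`. -/
def sufSum {k p : ℕ} (K : Fin p → Fin (k + 1)) (i : Fin p) : ℤ :=
  ∑ j ∈ Finset.Ioi i, ((K j : ℕ) : ℤ)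

/-- The multivariate polynomial
`T^k_s = Σ_K Σ_{0 ≤ λ_1 < ⋯ < λ_p ≤ s-1} y^{k_1}_{λ_1 h} ⋯ y^{k_p}_{λ_p h + (k_1+⋯+k_{p-1})n}`,
summed over compositions `K = (k_1,…,k_p)` of `k`. -/
def Tpoly {R : Type*} [CommRing R] (y : ℕ → ℤ → R) (n h : ℤ) (k s : ℕ) : R :=
  ∑ p ∈ Finset.Icc 1 k, ∑ K ∈ comps k p,
    ∑ lam ∈ Finset.univ.filter (fun lam : Fin p → Fin s => ∀ i j, i < j → lam i < lam j),
      ∏ i, y ((K i : ℕ)) (((lam i : ℕ) : ℤ) * h + prefSum K i * n)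

/-- The multivariate polynomial
`S^k_s = (-1)^k Σ_K (-1)^p Σ_{0 ≤ λ_1 ≤ ⋯ ≤ λ_p ≤ s-1}
  y^{k_1}_{λ_1 h + (k_2+⋯+k_p)n} ⋯ y^{k_p}_{λ_p h}`,
summed over compositions `K = (k_1,…,k_p)` of `k`. -/
def Spoly {R : Type*} [CommRing R] (y : ℕ → ℤ → R) (n h : ℤ) (k s : ℕ) : R :=
  (-1) ^ k * ∑ p ∈ Finset.Icc 1 k, (-1) ^ p *
    ∑ K ∈ comps k p,
      ∑ lam ∈ Finset.univ.filter (fun lam : Fin p → Fin s => ∀ i j, i ≤ j → lam i ≤ lam j),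
        ∏ i, y ((K i : ℕ)) (((lam i : ℕ) : ℤ) * h + sufSum K i * n)

/-- The shift of variables `y^r_j ↦ y^r_{j+α}`. -/
def shiftVar {R : Type*} (y : ℕ → ℤ → R) (α : ℤ) : ℕ → ℤ → R := fun r j => y r (j + α)

/-- The variables `x^k_j = (-1)^k Σ_K (-1)^p y^{k_1}_{j+(k_2+⋯+k_p)n} ⋯ y^{k_p}_j`
(sum over compositions `K` of `k`), i.e. `x^k_j = S^{k,j}_1`. -/
def Xvar {R : Type*} [CommRing R] (y : ℕ → ℤ → R) (n : ℤ) (k : ℕ) (j : ℤ) : R :=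
  (-1) ^ k * ∑ p ∈ Finset.Icc 1 k, (-1) ^ p *
    ∑ K ∈ comps k p, ∏ i, y ((K i : ℕ)) (j + sufSum K i * n)

/-!
Read a family `A : ℕ → ℤ → R` as the skew power series `∑ᵣ Aᵣ Xʳ` with coefficients in the
functions `ℤ → R`, where `X` acts on a coefficient by the shift `j ↦ j + n`; `shiftConv` is the
product of these series. Putting `y⁰ := 1` turns `y` into a series `Y = 1 + N` with `N` of
positive order, and expanding `Y⁻¹ = ∑ₚ (-N)ᵖ` coefficientwise gives exactly the alternating sums
over compositions defining `x`: the coefficient of `Xʳ` in `Y⁻¹` is `(-1)ʳ xʳ`. So the transform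
is `Y ↦ τ(Y⁻¹)`, where `τ : X ↦ -X` is an involutive ring automorphism, and applying it twice
gives `τ(τ(Y⁻¹)⁻¹) = Y`. The expansion only shows that `Y⁻¹` is a left inverse; applied to `x` it
also provides a left inverse of `τ(Y⁻¹)`, and associativity makes the two one-sided inverses of
`Y⁻¹` agree.
-/

section ShiftConv

variable {R : Type*} [Semiring R]

def shiftConv (n : ℤ) (A B : ℕ → ℤ → R) : ℕ → ℤ → R :=
  fun r j => ∑ p ∈ antidiagonal r, A p.1 j * B p.2 (j + p.1 * n)

theorem shiftConv_assoc (n : ℤ) (A B C : ℕ → ℤ → R) :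
    shiftConv n (shiftConv n A B) C = shiftConv n A (shiftConv n B C) := by
  ext r j
  simp only [shiftConv, sum_mul, mul_sum, sum_sigma']
  apply sum_nbij' (fun ⟨⟨_a, b⟩, ⟨c, d⟩⟩ ↦ ⟨(c, d + b), (d, b)⟩)
    (fun ⟨⟨c, _e⟩, ⟨d, b⟩⟩ ↦ ⟨(c + d, b), (c, d)⟩) <;>
    aesop (add simp [add_assoc, mul_assoc, add_mul])

theorem shiftConv_single_left (n : ℤ) (A : ℕ → ℤ → R) :
    shiftConv n (Pi.single 0 1) A = A := by
  ext r j
  rw [shiftConv, sum_eq_single_of_mem (0, r) (by simp)]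
  · simp
  · rintro ⟨a, b⟩ hp hab
    have ha : a ≠ 0 := by rintro rfl; simp_all
    simp [ha]

theorem shiftConv_single_right (n : ℤ) (A : ℕ → ℤ → R) :
    shiftConv n A (Pi.single 0 1) = A := by
  ext r j
  rw [shiftConv, sum_eq_single_of_mem (r, 0) (by simp)]
  · simp
  · rintro ⟨a, b⟩ hp hab
    have hb : b ≠ 0 := by rintro rfl; simp_all
    simp [hb]

theorem shiftConv_add (n : ℤ) (A B C : ℕ → ℤ → R) :
    shiftConv n A (B + C) = shiftConv n A B + shiftConv n A C := by
  ext r j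
  simp [shiftConv, mul_add, sum_add_distrib]

theorem eq_of_shiftConv_eq_single {n : ℤ} {L A B : ℕ → ℤ → R}
    (hL : shiftConv n L A = Pi.single 0 1) (hB : shiftConv n A B = Pi.single 0 1) : L = B :=
  calc L = shiftConv n L (shiftConv n A B) := by rw [hB, shiftConv_single_right]
    _ = shiftConv n (shiftConv n L A) B := (shiftConv_assoc n L A B).symm
    _ = B := by rw [hL, shiftConv_single_left]

end ShiftConv

section SignTwist

variable {R : Type*} [Ring R]

def signTwist (A : ℕ → ℤ → R) : ℕ → ℤ → R := fun r j => (-1) ^ r * A r j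

theorem signTwist_signTwist (A : ℕ → ℤ → R) : signTwist (signTwist A) = A := by
  ext r j
  rw [signTwist, signTwist, ← mul_assoc, ← pow_add, Even.neg_one_pow ⟨r, rfl⟩, one_mul]

theorem signTwist_single : signTwist (Pi.single 0 1 : ℕ → ℤ → R) = Pi.single 0 1 := by
  ext r j
  obtain rfl | hr := eq_or_ne r 0 <;> simp [signTwist, *]

theorem signTwist_shiftConv (n : ℤ) (A B : ℕ → ℤ → R) :
    signTwist (shiftConv n A B) = shiftConv n (signTwist A) (signTwist B) := by
  ext r j
  simp only [signTwist, shiftConv, mul_sum]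
  refine sum_congr rfl fun p hp => ?_
  rw [← mem_antidiagonal.mp hp, pow_add, mul_assoc, mul_assoc,
    ((Commute.neg_one_left (A p.1 j)).pow_left p.2).left_comm]

end SignTwist

theorem sum_antidiagonalTuple_succ {M : Type*} [AddCommMonoid M] {q : ℕ}
    (f : (Fin (q + 1) → ℕ) → M) (r : ℕ) :
    ∑ L ∈ Nat.antidiagonalTuple (q + 1) r, f L
      = ∑ p ∈ antidiagonal r, ∑ L ∈ Nat.antidiagonalTuple q p.2, f (Fin.cons p.1 L) := by
  rw [sum_sigma']
  refine sum_nbij' (fun L => ⟨(L 0, r - L 0), Fin.tail L⟩) (fun x => Fin.cons x.1.1 x.2)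
    ?_ ?_ ?_ ?_ ?_
  · intro L hL
    simp only [mem_sigma, HasAntidiagonal.mem_antidiagonal, Nat.mem_antidiagonalTuple] at hL ⊢
    rw [Fin.sum_univ_succ] at hL
    exact ⟨by omega, by simp [Fin.tail]; omega⟩
  · rintro ⟨⟨a, b⟩, L⟩ hx
    simp only [mem_sigma, HasAntidiagonal.mem_antidiagonal, Nat.mem_antidiagonalTuple] at hx ⊢
    rw [Fin.sum_cons]
    omega
  · intro L _
    exact Fin.cons_self_tail L
  · rintro ⟨⟨a, b⟩, L⟩ hx
    simp only [mem_sigma, HasAntidiagonal.mem_antidiagonal] at hx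
    simp [← hx.1]
  · intro L _
    simp

section Compositions

variable {R : Type*} [CommRing R]

def tupleWeight (y : ℕ → ℤ → R) (n j : ℤ) {q : ℕ} (L : Fin q → ℕ) : R :=
  ∏ i, y (L i) (j + (∑ l ∈ Ioi i, (L l : ℤ)) * n)

theorem tupleWeight_cons (y : ℕ → ℤ → R) (n j : ℤ) {q : ℕ} (a : ℕ) (L : Fin q → ℕ) :
    tupleWeight y n j (Fin.cons a L : Fin (q + 1) → ℕ)
      = y a (j + (∑ l, (L l : ℤ)) * n) * tupleWeight y n j L := by
  simp [tupleWeight, Fin.prod_univ_succ, Fin.sum_Ioi_succ]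

def tupleSum (y : ℕ → ℤ → R) (n : ℤ) (q : ℕ) : ℕ → ℤ → R :=
  fun r j => ∑ L ∈ Nat.antidiagonalTuple q r, tupleWeight y n j L

theorem tupleSum_zero (y : ℕ → ℤ → R) (n : ℤ) : tupleSum y n 0 = Pi.single 0 1 := by
  ext r j
  cases r <;> simp [tupleSum, tupleWeight]

theorem tupleSum_succ (y : ℕ → ℤ → R) (n : ℤ) (q : ℕ) :
    tupleSum y n (q + 1) = shiftConv n (tupleSum y n q) y := by
  ext r j
  simp only [tupleSum, shiftConv, sum_antidiagonalTuple_succ, tupleWeight_cons, sum_mul]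
  rw [← Finset.Nat.sum_antidiagonal_swap]
  refine sum_congr rfl fun p _ => sum_congr rfl fun L hL => ?_
  rw [mul_comm, ← Nat.mem_antidiagonalTuple.mp hL, Nat.cast_sum, sum_mul]
  rfl

theorem tupleSum_eq_zero_of_lt {y : ℕ → ℤ → R} (hy : y 0 = 0) (n : ℤ) {q r : ℕ} (h : r < q)
    (j : ℤ) : tupleSum y n q r j = 0 := by
  refine sum_eq_zero fun L hL => ?_
  obtain ⟨i, hi⟩ : ∃ i, L i = 0 := by
    by_contra! hpos
    have h_card : q ≤ ∑ i, L i := by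
      simpa using card_nsmul_le_sum univ L 1 fun i _ => Nat.one_le_iff_ne_zero.2 (hpos i)
    rw [Nat.mem_antidiagonalTuple.mp hL] at h_card
    omega
  exact prod_eq_zero (mem_univ i) (by rw [hi, hy]; rfl)

/-- `Function.update y 0 0` gives zero weight to tuples with a zero part, so only compositions
contribute. -/
def altCompSum (y : ℕ → ℤ → R) (n : ℤ) : ℕ → ℤ → R :=
  fun r j => ∑ q ∈ range (r + 1), (-1) ^ q * tupleSum (Function.update y 0 0) n q r j

theorem altCompSum_eq_sum_range (y : ℕ → ℤ → R) (n : ℤ) {r N : ℕ} (h : r < N) (j : ℤ) :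
    altCompSum y n r j = ∑ q ∈ range N, (-1) ^ q * tupleSum (Function.update y 0 0) n q r j := by
  refine sum_subset (range_subset_range.2 h) fun q _ hq => ?_
  rw [tupleSum_eq_zero_of_lt (Function.update_self ..) n (by simpa using hq), mul_zero]

theorem altCompSum_shiftConv (y : ℕ → ℤ → R) (n : ℤ) :
    shiftConv n (altCompSum y n) (Function.update y 0 1) = Pi.single 0 1 := by
  set y₀ := Function.update y 0 0
  have hy₀ : y₀ 0 = 0 := Function.update_self ..
  have h_update : Function.update y 0 1 = Pi.single 0 1 + y₀ := by
    ext r j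
    obtain rfl | hr := eq_or_ne r 0 <;> simp [y₀, *]
  ext r j
  have h_conv : shiftConv n (altCompSum y n) y₀ r j
      = ∑ q ∈ range (r + 1), (-1) ^ q * tupleSum y₀ n (q + 1) r j := by
    simp only [tupleSum_succ, shiftConv, mul_sum]
    rw [sum_comm]
    refine sum_congr rfl fun p hp => ?_
    rw [altCompSum_eq_sum_range y n (Nat.antidiagonal.fst_lt hp), sum_mul]
    simp only [mul_assoc, y₀]
  calc shiftConv n (altCompSum y n) (Function.update y 0 1) r j
      = altCompSum y n r j + shiftConv n (altCompSum y n) y₀ r j := by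
        rw [h_update, shiftConv_add, shiftConv_single_right]
        rfl
    _ = ∑ q ∈ range (r + 1),
          ((-1) ^ q * tupleSum y₀ n q r j - (-1) ^ (q + 1) * tupleSum y₀ n (q + 1) r j) := by
        rw [h_conv, altCompSum, ← sum_add_distrib]
        refine sum_congr rfl fun q _ => ?_
        ring
    _ = (Pi.single 0 1 : ℕ → ℤ → R) r j := by
        rw [sum_range_sub', tupleSum_eq_zero_of_lt hy₀ n (Nat.lt_succ_self r),
          tupleSum_zero]
        simp

theorem sum_comps_eq_tupleSum (y : ℕ → ℤ → R) (n j : ℤ) (c p : ℕ) :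
    ∑ K ∈ comps c p, ∏ i, y (K i) (j + sufSum K i * n)
      = tupleSum (Function.update y 0 0) n p c j := by
  have h_pos : ∀ L ∈ Nat.antidiagonalTuple p c,
      tupleWeight (Function.update y 0 0) n j L ≠ 0 → ∀ i, L i ≠ 0 := by
    intro L _ hL i hi
    exact hL (prod_eq_zero (mem_univ i) (by simp [hi]))
  rw [tupleSum, ← sum_filter_of_ne h_pos]
  refine sum_nbij (fun K i => (K i : ℕ)) ?_ ?_ ?_ ?_
  · intro K hK
    simp only [comps, mem_filter, mem_univ, true_and] at hK
    simp only [mem_filter, Nat.mem_antidiagonalTuple]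
    exact ⟨hK.2, fun i => Nat.one_le_iff_ne_zero.1 (hK.1 i)⟩
  · intro K _ K' _ h
    exact funext fun i => Fin.ext (congrFun h i)
  · intro L hL
    simp only [coe_filter, Nat.mem_antidiagonalTuple] at hL
    have h_le : ∀ i, L i ≤ c := fun i =>
      hL.1 ▸ single_le_sum (fun _ _ => Nat.zero_le _) (mem_univ i)
    refine ⟨fun i => ⟨L i, Nat.lt_succ_of_le (h_le i)⟩, ?_, rfl⟩
    simp only [comps, coe_filter, mem_univ, true_and]
    exact ⟨fun i => Nat.one_le_iff_ne_zero.2 (hL.2 i), hL.1⟩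
  · intro K hK
    simp only [comps, mem_filter, mem_univ, true_and] at hK
    refine prod_congr rfl fun i _ => ?_
    rw [Function.update_of_ne (Nat.one_le_iff_ne_zero.1 (hK.1 i))]
    rfl

theorem signTwist_altCompSum (y : ℕ → ℤ → R) (n : ℤ) :
    signTwist (altCompSum y n) = Function.update (Xvar y n) 0 1 := by
  ext r j
  cases r with
  | zero => simp [signTwist, altCompSum, tupleSum_zero]
  | succ m =>
    simp only [Function.update_of_ne (Nat.succ_ne_zero m), signTwist, altCompSum, Xvar,
      sum_comps_eq_tupleSum]
    rw [sum_range_succ', tupleSum_zero, Pi.single_eq_of_ne (Nat.succ_ne_zero m),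
      range_eq_Ico, ← Ico_add_one_right_eq_Icc,
      sum_Ico_add' (fun q => (-1) ^ q * tupleSum (Function.update y 0 0) n q (m + 1) j)]
    simp
end Compositions

theorem Xvar_involutive_general {R : Type*} [CommRing R] (y : ℕ → ℤ → R) (n : ℤ)
    (k : ℕ) (hk : 1 ≤ k) (j : ℤ) :
    Xvar (fun r m => Xvar y n r m) n k j = y k j := by
  have hx := altCompSum_shiftConv (Xvar y n) n
  rw [← signTwist_altCompSum y n] at hx
  have h_left : shiftConv n (signTwist (altCompSum (Xvar y n) n)) (altCompSum y n)
      = Pi.single 0 1 := by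
    simpa only [signTwist_shiftConv, signTwist_signTwist, signTwist_single]
      using congrArg signTwist hx
  have h_eq := eq_of_shiftConv_eq_single h_left (altCompSum_shiftConv y n)
  rw [signTwist_altCompSum] at h_eq
  simpa [Function.update_of_ne (by omega : k ≠ 0)] using congrFun (congrFun h_eq k) j

/-- the transformation `y ↦ x` is an involution: applying the same
formula to the family `x` recovers `y`. -/
theorem Xvar_involutive {R : Type*} [CommRing R] (y : ℕ → ℤ → R) (n : ℤ)
    (hn : 1 ≤ n) (k : ℕ) (hk : 1 ≤ k) (j : ℤ) :
    Xvar (fun r m => Xvar y n r m) n k j = y k j :=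
  Xvar_involutive_general y n k hk j
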